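/- For integers A ≥ p ≥ 0 and any integer B with A + B ≥ p: Σ_{w ∈ ℤ} (∏_{i=0}^{p−1}(w−i))·[A; w]·[B; m−w] = (∏_{i=0}^{p−1}(A−i))·[A+B−p; m−p] for any integer m, where [·;·] is the modified binomial coefficient. -/
import Mathlib


/-- The modified binomial coefficient `[A; B]` of Lee. -/
def mbinom (A B : ℤ) : ℚ :=
  if B < A then ∏ i ∈ Finset.range (A - B).toNat, (((A : ℚ) - i) / (((A : ℚ) - (B : ℚ)) - i))
  else if A = B then 1 else 0

open Finset

lemma descPochhammer_smeval_rat (x : ℚ) (n : ℕ) :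
    Polynomial.smeval (descPochhammer ℤ n) x = ∏ i ∈ Finset.range n, (x - i) := by
  induction n with
  | zero => simp [descPochhammer_zero]
  | succ n ih =>
    rw [descPochhammer_succ_right, Polynomial.smeval_mul, ih, Finset.prod_range_succ,
      Polynomial.smeval_sub, Polynomial.smeval_X, Polynomial.smeval_natCast]
    ring

lemma choose_rat (x : ℚ) (n : ℕ) :
    Ring.choose x n = (∏ i ∈ Finset.range n, (x - i)) / (Nat.factorial n) := by
  have h := Ring.descPochhammer_eq_factorial_smul_choose x n
  rw [descPochhammer_smeval_rat, nsmul_eq_mul] at h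
  rw [eq_div_iff (by exact_mod_cast Nat.factorial_ne_zero n), h]
  ring

lemma prod_sub_eq_factorial (n : ℕ) :
    ∏ i ∈ Finset.range n, ((n : ℚ) - i) = Nat.factorial n := by
  rw [← Finset.prod_range_reflect]
  rw [show ((Nat.factorial n : ℚ)) = ((∏ i ∈ Finset.range n, (i + 1) : ℕ) : ℚ) by
    rw [Finset.prod_range_add_one_eq_factorial]]
  push_cast
  refine Finset.prod_congr rfl fun j hj => ?_
  rw [Finset.mem_range] at hj
  have h1 : ((n - 1 - j : ℕ) : ℤ) = (n : ℤ) - 1 - j := by omega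
  have h2 : (↑(n - 1 - j) : ℚ) = (n : ℚ) - 1 - j := by exact_mod_cast h1
  rw [h2]; ring

lemma mbinom_eq_choose (A B : ℤ) (h : B ≤ A) :
    mbinom A B = Ring.choose (A : ℚ) (A - B).toNat := by
  rcases lt_or_eq_of_le h with hlt | heq
  · unfold mbinom
    rw [if_pos hlt, choose_rat, Finset.prod_div_distrib]
    congr 1
    have hn : (((A - B).toNat : ℤ) : ℚ) = (A : ℚ) - B := by
      rw [Int.toNat_of_nonneg (by omega)]; push_cast; ring
    rw [← prod_sub_eq_factorial (A - B).toNat]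
    refine Finset.prod_congr rfl fun i _ => ?_
    rw [show ((((A - B).toNat : ℕ)) : ℚ) = (A : ℚ) - B from by exact_mod_cast hn]
  · subst heq
    unfold mbinom
    rw [if_neg (lt_irrefl _), if_pos rfl, sub_self, Int.toNat_zero, Ring.choose_zero_right]

lemma mbinom_eq_zero {A B : ℤ} (h : A < B) : mbinom A B = 0 := by
  unfold mbinom
  rw [if_neg (by omega), if_neg (by omega)]

lemma choose_int_cast_eq_zero {c : ℤ} (hc : 0 ≤ c) {k : ℕ} (hk : c < (k : ℤ)) :
    Ring.choose ((c : ℤ) : ℚ) k = 0 := by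
  lift c to ℕ using hc
  rw [Int.cast_natCast, Ring.choose_natCast,
    Nat.choose_eq_zero_of_lt (by exact_mod_cast hk), Nat.cast_zero]

lemma mbinom_neg {A B : ℤ} (hA : 0 ≤ A) (hB : B < 0) : mbinom A B = 0 := by
  rw [mbinom_eq_choose A B (by omega)]
  exact choose_int_cast_eq_zero hA (by omega)

lemma key_absorb (x : ℚ) (p k : ℕ) :
    (∏ i ∈ Finset.range p, (x - k - i)) * Ring.choose x k
      = (∏ i ∈ Finset.range p, (x - i)) * Ring.choose (x - p) k := by
  rw [choose_rat, choose_rat, ← mul_div_assoc, ← mul_div_assoc]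
  congr 1
  have h1 : (∏ i ∈ Finset.range k, (x - i)) * (∏ i ∈ Finset.range p, (x - k - i))
      = ∏ i ∈ Finset.range (k + p), (x - i) := by
    rw [Finset.prod_range_add]
    congr 1
    refine Finset.prod_congr rfl fun i _ => ?_
    push_cast; ring
  have h2 : (∏ i ∈ Finset.range p, (x - i)) * (∏ i ∈ Finset.range k, (x - p - i))
      = ∏ i ∈ Finset.range (p + k), (x - i) := by
    rw [Finset.prod_range_add]
    congr 1
    refine Finset.prod_congr rfl fun i _ => ?_
    push_cast; ring
  rw [mul_comm, h1, h2, add_comm k p]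

theorem stmt_10 (A B m : ℤ) (p : ℕ) (hpA : (p : ℤ) ≤ A) (hpAB : (p : ℤ) ≤ A + B) :
    ∑ᶠ w : ℤ, (∏ i ∈ Finset.range p, ((w : ℚ) - i)) * mbinom A w * mbinom B (m - w)
      = (∏ i ∈ Finset.range p, ((A : ℚ) - i)) * mbinom (A + B - p) (m - p) := by
  classical
  have hA0 : (0 : ℤ) ≤ A := le_trans (by positivity) hpA
  set f : ℤ → ℚ := fun w =>
    (∏ i ∈ Finset.range p, ((w : ℚ) - i)) * mbinom A w * mbinom B (m - w) with hf
  have hsupp : Function.support f ⊆ ↑(Finset.Icc (p : ℤ) A) := by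
    intro w hw
    rw [Function.mem_support] at hw
    rw [Finset.mem_coe, Finset.mem_Icc]
    by_contra hcon
    rw [not_and_or] at hcon
    apply hw
    rcases hcon with hcon | hcon
    · push_neg at hcon
      rcases lt_or_ge w 0 with hw0 | hw0
      · rw [hf]; simp [mbinom_neg hA0 hw0]
      · have hmem : w.toNat ∈ Finset.range p := by
          rw [Finset.mem_range]; omega
        have hval : (w : ℚ) - (w.toNat : ℕ) = 0 := by
          rw [show ((w.toNat : ℕ) : ℚ) = ((w.toNat : ℤ) : ℚ) by push_cast; ring,
            Int.toNat_of_nonneg hw0, sub_self]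
        rw [hf]
        simp only []
        rw [Finset.prod_eq_zero hmem hval, zero_mul, zero_mul]
    · push_neg at hcon
      rw [hf]; simp [mbinom_eq_zero hcon]
  rw [finsum_eq_sum_of_support_subset f hsupp]
  have hterm : ∀ w ∈ Finset.Icc (p : ℤ) A, f w =
      (∏ i ∈ Finset.range p, ((A : ℚ) - i)) *
        (Ring.choose ((A : ℚ) - p) ((A - w).toNat) * mbinom B (m - w)) := by
    intro w hw
    rw [Finset.mem_Icc] at hw
    have hk : (((A - w).toNat : ℤ) : ℚ) = (A : ℚ) - w := by
      rw [Int.toNat_of_nonneg (by omega)]; push_cast; ring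
    have hw' : (w : ℚ) = (A : ℚ) - (((A - w).toNat : ℕ) : ℚ) := by
      rw [show ((((A - w).toNat : ℕ)) : ℚ) = (A : ℚ) - w from by exact_mod_cast hk]; ring
    rw [hf]
    simp only []
    rw [mbinom_eq_choose A w hw.2]
    have hprod : (∏ i ∈ Finset.range p, ((w : ℚ) - i))
        = ∏ i ∈ Finset.range p, ((A : ℚ) - ((A - w).toNat : ℕ) - i) := by
      refine Finset.prod_congr rfl fun i _ => ?_
      rw [hw']
    rw [hprod, key_absorb ((A : ℚ)) p ((A - w).toNat), mul_assoc]
  rw [Finset.sum_congr rfl hterm, ← Finset.mul_sum]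
  by_cases hm : m ≤ A + B
  · -- main case
    set n := (A + B - m).toNat with hn0
    have hn : (n : ℤ) = A + B - m := Int.toNat_of_nonneg (by omega)
    congr 1
    have hRcast : ((A + B - (p : ℤ) : ℤ) : ℚ) = ((A : ℚ) - p) + B := by push_cast; ring
    have hRn : (A + B - (p : ℤ) - (m - p)).toNat = n := by omega
    rw [mbinom_eq_choose (A + B - p) (m - p) (by omega), hRn, hRcast,
      Ring.add_choose_eq n (Commute.all _ _),
      Finset.Nat.sum_antidiagonal_eq_sum_range_succ_mk]
    -- now goal: sum over Icc = ∑ i in range (n+1), choose (A-p) i * choose B (n-i)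
    set H : ℕ → ℚ := fun i =>
      Ring.choose ((A : ℚ) - p) i * mbinom B (m - (A - (i : ℤ))) with hH
    have hchoose0 : ∀ i : ℕ, (A - p : ℤ) < i → Ring.choose ((A : ℚ) - p) i = 0 := by
      intro i hi
      have : ((A : ℚ) - p) = (((A - p : ℤ)) : ℚ) := by push_cast; ring
      rw [this]
      exact choose_int_cast_eq_zero (by omega) hi
    have step1 : ∑ w ∈ Finset.Icc (p : ℤ) A,
        (Ring.choose ((A : ℚ) - p) ((A - w).toNat) * mbinom B (m - w))
        = ∑ i ∈ Finset.range ((A - p).toNat + 1), H i := by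
      refine Finset.sum_nbij' (fun w => (A - w).toNat) (fun i => A - (i : ℤ)) ?_ ?_ ?_ ?_ ?_
      · intro w hw; rw [Finset.mem_Icc] at hw
        show (A - w).toNat ∈ Finset.range ((A - p).toNat + 1)
        rw [Finset.mem_range]; omega
      · intro i hi; rw [Finset.mem_range] at hi
        show A - (i : ℤ) ∈ Finset.Icc (p : ℤ) A
        rw [Finset.mem_Icc]; omega
      · intro w hw; rw [Finset.mem_Icc] at hw
        show A - ((A - w).toNat : ℤ) = w
        omega
      · intro i hi; rw [Finset.mem_range] at hi
        show (A - (A - (i : ℤ))).toNat = i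
        omega
      · intro w hw; rw [Finset.mem_Icc] at hw
        show Ring.choose ((A : ℚ) - p) ((A - w).toNat) * mbinom B (m - w) = H ((A - w).toNat)
        rw [hH]
        simp only []
        congr 2
        omega
    rw [step1]
    set M := max ((A - p).toNat + 1) (n + 1) with hM
    have e1 : ∑ i ∈ Finset.range ((A - p).toNat + 1), H i = ∑ i ∈ Finset.range M, H i := by
      refine Finset.sum_subset (Finset.range_subset_range.2 (le_max_left _ _)) ?_
      intro i _ hi
      rw [Finset.mem_range, not_lt] at hi
      rw [hH]
      simp only []
      rw [hchoose0 i (by omega), zero_mul]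
    have e2 : ∑ i ∈ Finset.range M, H i = ∑ i ∈ Finset.range (n + 1), H i := by
      refine (Finset.sum_subset (Finset.range_subset_range.2 (le_max_right _ _)) ?_).symm
      intro i _ hi
      rw [Finset.mem_range, not_lt] at hi
      rw [hH]
      simp only []
      rw [mbinom_eq_zero (by omega : B < m - (A - (i : ℤ))), mul_zero]
    have e3 : ∑ i ∈ Finset.range (n + 1), H i = ∑ i ∈ Finset.range (n + 1),
        Ring.choose ((A : ℚ) - p) i * Ring.choose ((B : ℚ)) (n - i) := by
      refine Finset.sum_congr rfl fun i hi => ?_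
      rw [Finset.mem_range] at hi
      rw [hH]
      simp only []
      have hin : i ≤ n := by omega
      rw [mbinom_eq_choose B (m - (A - i)) (by omega),
        show (B - (m - (A - (i : ℤ)))).toNat = n - i from by omega]
    rw [e1, e2, e3]
  · -- degenerate case
    push_neg at hm
    rw [mbinom_eq_zero (by omega : A + B - p < m - p), mul_zero]
    rw [Finset.sum_eq_zero, mul_zero]
    intro w hw
    rw [Finset.mem_Icc] at hw
    rw [mbinom_eq_zero (by omega : B < m - w), mul_zero]
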